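/- arXiv:2410.01184 — 8 statements merged into one kernel-verified Lean document; each statement's English description precedes it below -/
import Mathlib

section
/- Let q = p^e be a prime power and r ≥ 1 an odd integer. Let f ∈ ℚ[T] be a nonzero polynomial such that every complex root β of f is a q^r-Weil number and β ≠ √(q^r) and β ≠ −√(q^r). Let v be any group homomorphism from the multiplicative group ℂˣ to the additive group ℚ with v(q) = 1. Then the multiplicity of the value r/2 in the multiset {v(β) : β a complex root of f, counted with multiplicity} is even. -/
open Polynomial

private lemma even_aux {α : Type*} [DecidableEq α] (σ : α → α) (hσ : ∀ x, σ (σ x) = x) :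
    ∀ n (S : Multiset α), Multiset.card S = n → S.map σ = S → (∀ x ∈ S, σ x ≠ x) →
      Even n := by
  intro n
  induction n using Nat.strong_induction_on with
  | _ n ih =>
    intro S hcard hmap hfix
    rcases Multiset.empty_or_exists_mem S with hS | ⟨a, haS⟩
    · simp [hS] at hcard; simp [← hcard]
    · have hσa : σ a ∈ S := by
        rw [← hmap]; exact Multiset.mem_map_of_mem σ haS
      have hne : σ a ≠ a := hfix a haS
      have hσa' : σ a ∈ S.erase a := (Multiset.mem_erase_of_ne hne).mpr hσa
      set T := (S.erase a).erase (σ a) with hT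
      have hS1 : S = a ::ₘ σ a ::ₘ T := by
        rw [hT, Multiset.cons_erase hσa', Multiset.cons_erase haS]
      have hTmap : T.map σ = T := by
        have : σ a ::ₘ a ::ₘ T.map σ = a ::ₘ σ a ::ₘ T := by
          have := hmap
          rw [hS1] at this
          simpa [hσ a] using this
        rw [Multiset.cons_swap] at this
        exact (Multiset.cons_inj_right _).mp ((Multiset.cons_inj_right _).mp this)
      have hcardT : Multiset.card T + 2 = n := by
        rw [← hcard, hS1]; simp
      have hlt : Multiset.card T < n := by omega
      have hfixT : ∀ x ∈ T, σ x ≠ x := fun x hx =>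
        hfix x (by rw [hS1]; exact Multiset.mem_cons_of_mem (Multiset.mem_cons_of_mem hx))
      have := ih _ hlt T rfl hTmap hfixT
      rw [← hcardT]
      rcases this with ⟨k, hk⟩
      exact ⟨k + 1, by omega⟩

/-- Let `q = p^e` be a prime power and `r ≥ 1` odd. Let `f ∈ ℚ[T]` be a
nonzero polynomial such that every complex root `β` of `f` is a `q^r`-Weil number with
`β ≠ ±√(q^r)`. Let `v` be any group homomorphism `ℂˣ → ℚ` (expressed as a function on `ℂ`
additive on products of nonzero elements) with `v q = 1`. Then the multiplicity of `r/2`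
in the multiset `{v(β) : β a complex root of f, with multiplicity}` is even. -/
theorem stmt_3 (p e : ℕ) (hp : p.Prime) (he : 1 ≤ e) (q : ℕ) (hq : q = p ^ e)
    (r : ℕ) (hr : 1 ≤ r) (hodd : Odd r)
    (f : ℚ[X]) (hf : f ≠ 0)
    (hWeil : ∀ β : ℂ, (aeval β) f = 0 →
      (β ≠ 0 ∧ β * (starRingEnd ℂ) β = (q : ℂ) ^ r) ∧
      β ≠ ((Real.sqrt ((q : ℝ) ^ r) : ℝ) : ℂ) ∧
      β ≠ -((Real.sqrt ((q : ℝ) ^ r) : ℝ) : ℂ))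
    (v : ℂ → ℚ)
    (hv : ∀ a b : ℂ, a ≠ 0 → b ≠ 0 → v (a * b) = v a + v b)
    (hvq : v (q : ℂ) = 1) :
    Even (Multiset.count ((r : ℚ) / 2) (((f.map (algebraMap ℚ ℂ)).roots).map v)) := by
  classical
  set F : ℂ[X] := f.map (algebraMap ℚ ℂ) with hF
  set R : Multiset ℂ := F.roots with hR
  have hq0 : (q : ℂ) ≠ 0 := by
    have : q ≠ 0 := by
      rw [hq]; exact pow_ne_zero _ hp.pos.ne'
    exact_mod_cast this
  -- roots of F are roots of f via aeval
  have hroot : ∀ β ∈ R, (aeval β) f = 0 := by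
    intro β hβ
    have hF0 : F ≠ 0 := by
      simpa [hF] using (Polynomial.map_ne_zero_iff (algebraMap ℚ ℂ).injective).mpr hf
    have := (Polynomial.mem_roots hF0).mp hβ
    simpa [hF, Polynomial.IsRoot, Polynomial.eval_map, Polynomial.aeval_def] using this
  -- conjugation invariance of R
  have hconjR : R.map (starRingEnd ℂ) = R := by
    have h1 : F.map (starRingEnd ℂ) = F := by
      rw [hF, Polynomial.map_map]
      congr 1
      ext x
      simp [map_ratCast]
    have h2 : (F.map (starRingEnd ℂ)).roots = F.roots.map (starRingEnd ℂ) :=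
      (IsAlgClosed.splits F).roots_map_of_injective (starRingEnd ℂ).injective
    rw [h1] at h2
    exact h2.symm
  -- v of powers
  have hv1 : v 1 = 0 := by
    have := hv 1 1 one_ne_zero one_ne_zero
    simp at this; linarith
  have hvpow : ∀ n : ℕ, v ((q : ℂ) ^ n) = n := by
    intro n
    induction n with
    | zero => simpa using hv1
    | succ k ihk =>
      rw [pow_succ, hv _ _ (pow_ne_zero _ hq0) hq0, ihk, hvq]
      push_cast; ring
  -- key: v (conj β) = r - v β for β ∈ R
  have hvconj : ∀ β ∈ R, v ((starRingEnd ℂ) β) = (r : ℚ) - v β := by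
    intro β hβ
    obtain ⟨⟨hβ0, hββ⟩, _, _⟩ := hWeil β (hroot β hβ)
    have hcβ0 : (starRingEnd ℂ) β ≠ 0 := by
      simpa using hβ0
    have := hv β ((starRingEnd ℂ) β) hβ0 hcβ0
    rw [hββ, hvpow r] at this
    linarith
  -- no fixed points
  have hnofix : ∀ β ∈ R, (starRingEnd ℂ) β ≠ β := by
    intro β hβ hfix
    obtain ⟨⟨hβ0, hββ⟩, hs1, hs2⟩ := hWeil β (hroot β hβ)
    have him : β.im = 0 := by
      have := congrArg Complex.im hfix
      simp [Complex.conj_im] at this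
      linarith
    have hβre : β = (β.re : ℂ) := by
      exact Complex.ext rfl (by simp [him])
    have hsq : (β.re) ^ 2 = (q : ℝ) ^ r := by
      have : β * (starRingEnd ℂ) β = ((β.re : ℂ)) * ((β.re : ℂ)) := by
        rw [hfix, ← hβre]
      rw [this] at hββ
      have : ((β.re ^ 2 : ℝ) : ℂ) = (((q : ℝ) ^ r : ℝ) : ℂ) := by
        push_cast
        rw [← hββ]; ring
      exact_mod_cast this
    have hsqrt : Real.sqrt ((q : ℝ) ^ r) ^ 2 = (q : ℝ) ^ r :=
      Real.sq_sqrt (by positivity)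
    have : β.re = Real.sqrt ((q : ℝ) ^ r) ∨ β.re = -Real.sqrt ((q : ℝ) ^ r) := by
      have h := hsq.trans hsqrt.symm
      rcases sq_eq_sq_iff_eq_or_eq_neg.mp h with h1 | h1
      · exact Or.inl h1
      · exact Or.inr h1
    rcases this with h1 | h1
    · exact hs1 (by rw [hβre, h1])
    · exact hs2 (by rw [hβre, h1]; push_cast; ring)
  -- reduce count to filter card
  rw [Multiset.count_map]
  set P : ℂ → Prop := fun β => (r : ℚ) / 2 = v β with hP
  set S : Multiset ℂ := R.filter P with hS
  -- S is conj-invariant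
  have hSmap : S.map (starRingEnd ℂ) = S := by
    have hfc : R.filter (fun x => P ((starRingEnd ℂ) x)) = R.filter P := by
      apply Multiset.filter_congr
      intro x hx
      have := hvconj x hx
      constructor
      · intro h; rw [hP] at h ⊢; simp only at h ⊢; rw [this] at h; linarith
      · intro h; rw [hP] at h ⊢; simp only at h ⊢; rw [this]; linarith
    calc S.map (starRingEnd ℂ)
        = (R.filter (fun x => P ((starRingEnd ℂ) x))).map (starRingEnd ℂ) := by rw [hfc]
      _ = (R.map (starRingEnd ℂ)).filter P := by rw [Multiset.filter_map]; rfl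
      _ = S := by rw [hconjR]
  exact even_aux (starRingEnd ℂ) (fun x => Complex.conj_conj x) _ S rfl hSmap
    (fun x hx => hnofix x (Multiset.mem_of_le (Multiset.filter_le _ _) hx))
end

section
/- Let k be an algebraically closed field, V a finite-dimensional k-vector space, B : V → V → k a nondegenerate bilinear form, F : V → V a linear endomorphism, and λ ∈ k nonzero, such that B(Fx, Fy) = λ·B(x, y) for all x, y ∈ V. Then F is bijective, and the multiset of roots of the characteristic polynomial of F (counted with multiplicity) is invariant under the involution β ↦ λ/β; in particular every eigenvalue of F is nonzero. -/
open Polynomial Matrix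

lemma eval_charpoly_det {n : Type*} [Fintype n] [DecidableEq n] {R : Type*} [CommRing R]
    (M : Matrix n n R) (t : R) :
    M.charpoly.eval t = (t • (1 : Matrix n n R) - M).det := by
  rw [Matrix.charpoly, ← coe_evalRingHom, RingHom.map_det]
  congr 1
  ext i j
  rcases eq_or_ne i j with rfl | h
  · simp [Matrix.charmatrix_apply_eq, Matrix.one_apply]
  · simp [Matrix.charmatrix_apply_ne _ _ _ h, Matrix.one_apply, h]


/-- Let `k` be an algebraically closed field, `V` a finite-dimensional
`k`-vector space, `B` a nondegenerate bilinear form on `V`, `F` an endomorphism of `V`,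
and `l ≠ 0` in `k` with `B (F x) (F y) = l * B x y` for all `x y`. Then `F` is bijective,
the multiset of roots of the characteristic polynomial of `F` is invariant under
`β ↦ l / β`, and every eigenvalue of `F` is nonzero. -/
theorem stmt_7 (k : Type*) [Field k] [IsAlgClosed k]
    (V : Type*) [AddCommGroup V] [Module k V] [FiniteDimensional k V]
    (B : V →ₗ[k] V →ₗ[k] k)
    (hB1 : ∀ x : V, (∀ y : V, B x y = 0) → x = 0)
    (hB2 : ∀ y : V, (∀ x : V, B x y = 0) → y = 0)
    (F : V →ₗ[k] V) (l : k) (hl : l ≠ 0)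
    (hF : ∀ x y : V, B (F x) (F y) = l * B x y) :
    Function.Bijective F ∧
      (∀ β : k, (LinearMap.charpoly F).rootMultiplicity β
        = (LinearMap.charpoly F).rootMultiplicity (l / β)) ∧
      (∀ β : k, Module.End.HasEigenvalue F β → β ≠ 0) := by
  classical
  -- injectivity
  have hinj : Function.Injective F := by
    rw [← LinearMap.ker_eq_bot, LinearMap.ker_eq_bot']
    intro x hx
    apply hB1
    intro y
    have h := hF x y
    rw [hx] at h
    simp only [map_zero, LinearMap.zero_apply] at h
    exact (mul_eq_zero.mp h.symm).resolve_left hl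
  have hbij : Function.Bijective F :=
    ⟨hinj, (LinearMap.injective_iff_surjective).mp hinj⟩
  refine ⟨hbij, ?_, ?_⟩
  swap
  · intro β hei hβ0
    subst hβ0
    obtain ⟨x, hx⟩ := hei.exists_hasEigenvector
    exact hx.2 (hinj (by simpa [Module.End.HasEigenvector.apply_eq_smul hx] using rfl.symm))
  -- matrix setup
  set b := Module.finBasis k V with hb
  set A := LinearMap.toMatrix b b F with hA
  set M : Matrix (Fin (Module.finrank k V)) (Fin (Module.finrank k V)) k :=
    Matrix.of fun i j => B (b i) (b j) with hM
  have hFb : ∀ j, F (b j) = ∑ i, A i j • b i := by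
    intro j
    simp only [hA, LinearMap.toMatrix_apply]
    exact (b.sum_repr (F (b j))).symm
  have hrel : Aᵀ * M * A = l • M := by
    ext i j
    have h := hF (b i) (b j)
    rw [hFb i, hFb j] at h
    simp only [map_sum, LinearMap.sum_apply, _root_.map_smul, LinearMap.smul_apply,
      smul_eq_mul] at h
    simp only [Matrix.mul_apply, Matrix.smul_apply, Matrix.transpose_apply, smul_eq_mul, hM,
      Matrix.of_apply]
    rw [← h]
    apply Finset.sum_congr rfl
    intro x _
    simp only [Finset.sum_mul, Finset.mul_sum]
    apply Finset.sum_congr rfl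
    intro d _
    ring
  -- M is invertible
  have hMdet : M.det ≠ 0 := by
    intro hdet
    obtain ⟨v, hv0, hv⟩ := (Matrix.exists_mulVec_eq_zero_iff).mpr hdet
    apply hv0
    have hy0 : ∀ c, ∑ j, v j * B (b c) (b j) = 0 := by
      intro c
      have hc := congrFun hv c
      simp only [Matrix.mulVec, dotProduct, hM, Matrix.of_apply, Pi.zero_apply] at hc
      rw [← hc]
      exact Finset.sum_congr rfl fun j _ => mul_comm _ _
    have hy : (∑ j, v j • b j) = 0 := by
      apply hB2
      intro x
      conv_lhs => rw [← b.sum_repr x]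
      simp only [map_sum, LinearMap.sum_apply, _root_.map_smul, LinearMap.smul_apply,
        smul_eq_mul, Finset.mul_sum]
      rw [Finset.sum_comm]
      refine Finset.sum_eq_zero fun c _ => ?_
      have hfac : ∑ x1, v x1 * ((b.repr x) c * B (b c) (b x1))
          = (b.repr x) c * ∑ x1, v x1 * B (b c) (b x1) := by
        rw [Finset.mul_sum]
        exact Finset.sum_congr rfl fun _ _ => by ring
      rw [hfac, hy0 c, mul_zero]
    have hrepr := b.repr_sum_self v
    rw [hy, map_zero] at hrepr
    exact funext fun j => by simpa using (congrFun hrepr j).symm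
  -- det A is nonzero
  have hdetrel := congrArg Matrix.det hrel
  rw [Matrix.det_mul, Matrix.det_mul, Matrix.det_transpose, Matrix.det_smul] at hdetrel
  have hAdet : A.det ≠ 0 := by
    intro h0
    rw [h0] at hdetrel
    simp only [mul_zero, zero_mul] at hdetrel
    exact (mul_ne_zero (pow_ne_zero _ hl) hMdet) hdetrel.symm
  -- setup
  have hMunit : IsUnit M.det := isUnit_iff_ne_zero.mpr hMdet
  have hAunit : IsUnit A.det := isUnit_iff_ne_zero.mpr hAdet
  have hAAinv : A * A⁻¹ = 1 := Matrix.mul_nonsing_inv A hAunit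
  have hMMinv : M * M⁻¹ = 1 := Matrix.mul_nonsing_inv M hMunit
  set p := A.charpoly with hp
  set s := p.roots with hs
  have hcardn : Multiset.card s = Fintype.card (Fin (Module.finrank k V)) := by
    rw [hs, ← Matrix.charpoly_natDegree_eq_dim A]
    exact Polynomial.splits_iff_card_roots.mp (IsAlgClosed.splits p)
  have hprod : p = (s.map fun r => X - C r).prod :=
    (IsAlgClosed.splits p).eq_prod_roots_of_monic A.charpoly_monic
  have hdetprod : A.det = s.prod := Matrix.det_eq_prod_roots_charpoly A
  have h0s : (0 : k) ∉ s := fun h0 => hAdet (by rw [hdetprod]; exact Multiset.prod_eq_zero h0)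
  -- transpose relation
  have hAT : Aᵀ = M * (l • A⁻¹) * M⁻¹ := by
    have h1 : Aᵀ * M = l • M * A⁻¹ := by
      rw [← hrel, mul_assoc (Aᵀ * M) A A⁻¹, hAAinv, mul_one]
    calc Aᵀ = (Aᵀ * M) * M⁻¹ := by rw [mul_assoc, hMMinv, mul_one]
      _ = (l • M * A⁻¹) * M⁻¹ := by rw [h1]
      _ = M * (l • A⁻¹) * M⁻¹ := by rw [Matrix.smul_mul, ← Matrix.mul_smul]
  set q := (l • A⁻¹).charpoly with hq
  have hMd : M.det * M⁻¹.det = 1 := by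
    rw [← Matrix.det_mul, hMMinv, Matrix.det_one]
  -- p = q
  have hpq : p = q := by
    apply Polynomial.funext
    intro t
    rw [hp, hq, eval_charpoly_det, eval_charpoly_det]
    calc (t • 1 - A).det = (t • 1 - A)ᵀ.det := (Matrix.det_transpose _).symm
      _ = (t • (1 : Matrix (Fin (Module.finrank k V)) (Fin (Module.finrank k V)) k) - Aᵀ).det := by
          rw [Matrix.transpose_sub, Matrix.transpose_smul, Matrix.transpose_one]
      _ = (M * (t • (1 : Matrix (Fin (Module.finrank k V)) (Fin (Module.finrank k V)) k)
            - l • A⁻¹) * M⁻¹).det := by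
          rw [hAT]
          have hone : M * (t • (1 : Matrix (Fin (Module.finrank k V))
              (Fin (Module.finrank k V)) k)) * M⁻¹
              = t • (1 : Matrix (Fin (Module.finrank k V)) (Fin (Module.finrank k V)) k) := by
            rw [Matrix.mul_smul, mul_one, Matrix.smul_mul, hMMinv]
          rw [Matrix.mul_sub, Matrix.sub_mul, hone]
      _ = (t • (1 : Matrix (Fin (Module.finrank k V)) (Fin (Module.finrank k V)) k)
            - l • A⁻¹).det := by
          rw [Matrix.det_mul, Matrix.det_mul, mul_comm M.det, mul_assoc, hMd, mul_one]
  -- key determinant identity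
  have hkey : ∀ t : k, (t • A - l • (1 : Matrix (Fin (Module.finrank k V))
      (Fin (Module.finrank k V)) k)).det = (s.map fun r => r * t - l).prod := by
    intro t
    rcases eq_or_ne t 0 with rfl | ht
    · rw [zero_smul, zero_sub, ← neg_smul, Matrix.det_smul, Matrix.det_one, mul_one]
      have : (s.map fun r => r * 0 - l) = s.map fun _ => -l := by
        exact Multiset.map_congr rfl fun r _ => by ring
      rw [this, Multiset.map_const', Multiset.prod_replicate, hcardn]
    · have h1 : t • A - l • (1 : Matrix (Fin (Module.finrank k V))
          (Fin (Module.finrank k V)) k) = (-t) • ((l / t) • (1 : Matrix (Fin (Module.finrank k V))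
          (Fin (Module.finrank k V)) k) - A) := by
        rw [smul_sub, smul_smul, show (-t) * (l / t) = -l by field_simp, neg_smul, neg_smul,
          sub_neg_eq_add]
        abel
      rw [h1, Matrix.det_smul, ← eval_charpoly_det]
      rw [← hp, hprod, eval_multiset_prod, Multiset.map_map]
      simp only [Function.comp, eval_sub, eval_X, eval_C]
      calc (-t) ^ Fintype.card (Fin (Module.finrank k V)) * (s.map fun r => l / t - r).prod
          = (s.map fun _ => -t).prod * (s.map fun r => l / t - r).prod := by
            rw [Multiset.map_const', Multiset.prod_replicate, hcardn]
        _ = (s.map fun r => (-t) * (l / t - r)).prod := (Multiset.prod_map_mul).symm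
        _ = (s.map fun r => r * t - l).prod := by
            refine congrArg _ (Multiset.map_congr rfl fun r _ => ?_)
            field_simp
            ring
  have hq_eval : ∀ t : k, A.det * q.eval t = (s.map fun r => r * t - l).prod := by
    intro t
    rw [hq, eval_charpoly_det, ← Matrix.det_mul]
    have : A * (t • (1 : Matrix (Fin (Module.finrank k V)) (Fin (Module.finrank k V)) k)
        - l • A⁻¹) = t • A - l • 1 := by
      rw [Matrix.mul_sub, Matrix.mul_smul, Matrix.mul_smul, mul_one, hAAinv]
    rw [this, hkey t]
  have hq_prod : q = (s.map fun r => X - C (l / r)).prod := by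
    apply Polynomial.funext
    intro t
    apply mul_left_cancel₀ hAdet
    rw [hq_eval t, eval_multiset_prod, Multiset.map_map, hdetprod]
    simp only [Function.comp, eval_sub, eval_X, eval_C]
    rw [show s.prod = (s.map id).prod by rw [Multiset.map_id], ← Multiset.prod_map_mul]
    refine congrArg _ (Multiset.map_congr rfl fun r hr => ?_)
    have hr0 : r ≠ 0 := fun h => h0s (h ▸ hr)
    field_simp
    simp only [id]
    ring
  have hroots : s = s.map fun r => l / r := by
    have h1 : q.roots = s.map fun r => l / r := by
      rw [hq_prod,
        show (s.map fun r => X - C (l / r)) = (s.map fun r => l / r).map fun a => X - C a from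
          (Multiset.map_map (fun a => X - C a) (fun r => l / r) s).symm,
        Polynomial.roots_multiset_prod_X_sub_C]
    conv_lhs => rw [hs, hpq]
    exact h1
  -- conclusion
  intro β
  rw [← LinearMap.charpoly_toMatrix F b, ← Polynomial.count_roots, ← Polynomial.count_roots,
    ← hA, ← hp, ← hs]
  rcases eq_or_ne β 0 with rfl | hβ
  · rw [div_zero]
  · have hfinj : Function.Injective fun r : k => l / r := by
      intro a c hac
      simp only [div_eq_mul_inv] at hac
      exact inv_injective (mul_left_cancel₀ hl hac)
    have hββ : (fun r : k => l / r) (l / β) = β := by field_simp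
    calc s.count β = (s.map fun r => l / r).count β := by conv_lhs => rw [hroots]
      _ = (s.map fun r => l / r).count ((fun r : k => l / r) (l / β)) := by rw [hββ]
      _ = s.count (l / β) := Multiset.count_map_eq_count' _ s hfinj _
end

section
/- Let k be a field, V a finite-dimensional k-vector space, B : V → V → k a nondegenerate alternating bilinear form (B(x, x) = 0 for all x), F : V → V a linear endomorphism, and c ∈ k nonzero, such that B(Fx, Fy) = c²·B(x, y) for all x, y ∈ V. Then the multiplicity of c as a root of the characteristic polynomial of F is even. -/
open Polynomial


lemma my_charpoly_shift {ι : Type*} [Fintype ι] [DecidableEq ι] {k : Type*} [Field k]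
    (A : Matrix ι ι k) (c : k) :
    A.charpoly = ((A - c • 1).charpoly).comp (X - C c) := by
  have h := RingHom.map_det (eval₂RingHom (C : k →+* k[X]) (X - C c))
    (Matrix.charmatrix (A - c • 1))
  rw [Matrix.charpoly, Matrix.charpoly, Polynomial.comp, ← coe_eval₂RingHom, h]
  congr 1
  ext i j
  by_cases hij : i = j
  · subst hij
    simp [Matrix.charmatrix_apply, Matrix.one_apply, Matrix.diagonal_apply]
  · simp [Matrix.charmatrix_apply, Matrix.one_apply, Matrix.diagonal_apply, hij]

lemma my_charpoly_eval {ι : Type*} [Fintype ι] [DecidableEq ι] {k : Type*} [Field k]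
    (A : Matrix ι ι k) (r : k) :
    A.charpoly.eval r = (r • (1 : Matrix ι ι k) - A).det := by
  have h := RingHom.map_det (evalRingHom r) (Matrix.charmatrix A)
  rw [Matrix.charpoly]
  show (evalRingHom r) _ = _
  rw [h]
  congr 1
  ext i j
  by_cases hij : i = j
  · subst hij
    simp [Matrix.charmatrix_apply, Matrix.one_apply, Matrix.diagonal_apply]
  · simp [Matrix.charmatrix_apply, Matrix.one_apply, Matrix.diagonal_apply, hij]
open Polynomial Module

lemma my_toMatrix_sub_smul_one {k V : Type*} [Field k] [AddCommGroup V] [Module k V]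
    [FiniteDimensional k V] (φ : Module.End k V) (c : k) (b : Basis (Fin (finrank k V)) k V) :
    LinearMap.toMatrix b b (φ - c • 1) = LinearMap.toMatrix b b φ - c • 1 := by
  rw [map_sub, map_smul]
  congr 1
  rw [show (1 : Module.End k V) = LinearMap.id from rfl, LinearMap.toMatrix_id]

lemma my_end_charpoly_shift {k V : Type*} [Field k] [AddCommGroup V] [Module k V]
    [FiniteDimensional k V] (φ : Module.End k V) (c : k) :
    LinearMap.charpoly φ = (LinearMap.charpoly (φ - c • 1)).comp (X - C c) := by
  let b := Module.finBasis k V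
  rw [← LinearMap.charpoly_toMatrix φ b, ← LinearMap.charpoly_toMatrix (φ - c • 1) b,
    my_toMatrix_sub_smul_one, my_charpoly_shift]

lemma my_end_charpoly_eval {k V : Type*} [Field k] [AddCommGroup V] [Module k V]
    [FiniteDimensional k V] (φ : Module.End k V) (r : k) :
    (LinearMap.charpoly φ).eval r = LinearMap.det (r • (1 : Module.End k V) - φ) := by
  let b := Module.finBasis k V
  rw [← LinearMap.charpoly_toMatrix φ b, my_charpoly_eval, ← LinearMap.det_toMatrix b]
  congr 1
  rw [map_sub, map_smul]
  congr 1
  rw [show (1 : Module.End k V) = LinearMap.id from rfl, LinearMap.toMatrix_id]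

lemma my_even_finrank_of_alt_nondeg {k : Type*} [Field k] (n : ℕ) :
    ∀ (V : Type*) [AddCommGroup V] [Module k V] [FiniteDimensional k V],
      finrank k V = n → ∀ B : LinearMap.BilinForm k V,
      B.Nondegenerate → B.IsAlt → Even n := by
  induction n using Nat.strong_induction_on with
  | _ n IH =>
    intro V _ _ _ hn B hB halt
    rcases Nat.eq_zero_or_pos n with h0 | hpos
    · simp [h0]
    have : 0 < finrank k V := hn ▸ hpos
    have : Nontrivial V := Module.nontrivial_of_finrank_pos this
    obtain ⟨x, hx⟩ := exists_ne (0 : V)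
    have hxy : ∃ y : V, B x y ≠ 0 := by
      by_contra h
      push_neg at h
      exact hx (hB.1 x h)
    obtain ⟨y0, hy0⟩ := hxy
    set y : V := (B x y0)⁻¹ • y0 with hy
    have hxy1 : B x y = 1 := by
      simp [hy, inv_mul_cancel₀ hy0]
    have hyx : B y x = -1 := by
      rw [← LinearMap.IsAlt.neg halt x y, hxy1]
    set U : Submodule k V := Submodule.span k {x, y} with hU
    have hxU : x ∈ U := Submodule.subset_span (by simp)
    have hyU : y ∈ U := Submodule.subset_span (by simp)
    have hrestrict : (B.restrict U).Nondegenerate := by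
      refine (LinearMap.IsRefl.nondegenerate_iff_separatingLeft
        (LinearMap.IsAlt.isRefl (B := B.restrict U) (fun z => halt z))).mpr ?_
      intro z hz
      obtain ⟨a, b, hab⟩ := Submodule.mem_span_pair.mp z.2
      have h1 : B (z : V) x = 0 := hz ⟨x, hxU⟩
      have h2 : B (z : V) y = 0 := hz ⟨y, hyU⟩
      rw [← hab] at h1 h2
      simp only [map_add, map_smul, LinearMap.add_apply, LinearMap.smul_apply,
        smul_eq_mul] at h1 h2
      rw [halt x, hyx] at h1
      rw [hxy1, halt y] at h2
      have hb : b = 0 := by simpa using h1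
      have ha : a = 0 := by simpa [hb] using h2
      ext
      rw [← hab, ha, hb]
      simp
    have hrefl : B.IsRefl := halt.isRefl
    have hcompl : IsCompl U (B.orthogonal U) :=
      B.isCompl_orthogonal_of_restrict_nondegenerate hrefl hrestrict
    have horthnd : (B.restrict (B.orthogonal U)).Nondegenerate := by
      apply B.nondegenerate_restrict_of_disjoint_orthogonal hrefl
      rw [B.orthogonal_orthogonal hB hrefl]
      exact hcompl.disjoint.symm
    have hli : LinearIndependent k ![x, y] := by
      rw [LinearIndependent.pair_iff]
      intro s t hst
      have h1 : B (s • x + t • y) y = 0 := by rw [hst]; simp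
      have h2 : B (s • x + t • y) x = 0 := by rw [hst]; simp
      simp only [map_add, map_smul, LinearMap.add_apply, LinearMap.smul_apply,
        smul_eq_mul, halt x, halt y, hxy1, hyx] at h1 h2
      constructor
      · simpa using h1
      · simpa using h2
    have hU2 : finrank k U = 2 := by
      have : Set.range ![x, y] = {x, y} := by
        simp [Set.range_subset_iff]
        ext v; simp [Fin.exists_fin_two, or_comm]
      rw [hU, ← this, finrank_span_eq_card hli]
      simp
    have hdim : finrank k U + finrank k (B.orthogonal U) = n := by
      rw [← hn, ← Submodule.finrank_add_eq_of_isCompl hcompl]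
    have hlt : finrank k (B.orthogonal U) < n := by omega
    have hev := IH _ hlt (B.orthogonal U) rfl (B.restrict _) horthnd (fun z => halt z)
    rw [← hdim, hU2]
    exact even_two.add hev
/-- Let `k` be a field, `V` a finite-dimensional `k`-vector space, `B` a
nondegenerate alternating bilinear form on `V`, `F` an endomorphism, and `c ≠ 0` in `k`
with `B (F x) (F y) = c^2 * B x y` for all `x y`. Then the multiplicity of `c` as a root
of the characteristic polynomial of `F` is even. -/
theorem stmt_8 (k : Type*) [Field k]
    (V : Type*) [AddCommGroup V] [Module k V] [FiniteDimensional k V]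
    (B : V →ₗ[k] V →ₗ[k] k)
    (hB1 : ∀ x : V, (∀ y : V, B x y = 0) → x = 0)
    (hB2 : ∀ y : V, (∀ x : V, B x y = 0) → y = 0)
    (halt : ∀ x : V, B x x = 0)
    (F : V →ₗ[k] V) (c : k) (hc : c ≠ 0)
    (hF : ∀ x y : V, B (F x) (F y) = c ^ 2 * B x y) :
    Even ((LinearMap.charpoly F).rootMultiplicity c) := by
  set n := finrank k V with hn
  set f : Module.End k V := F with hf
  -- F is injective, hence bijective
  have hFinj : Function.Injective F := by
    intro a b hab
    have h0 : F (a - b) = 0 := by rw [map_sub, hab, sub_self]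
    have hab0 : a - b = 0 := by
      apply hB1
      intro y
      have h := hF (a - b) y
      rw [show f (a - b) = 0 from h0, map_zero, LinearMap.zero_apply] at h
      exact ((mul_eq_zero.mp h.symm).resolve_left (pow_ne_zero 2 hc))
    exact sub_eq_zero.mp hab0
  have hFsurj : Function.Surjective F := (LinearMap.injective_iff_surjective).mp hFinj
  let e : V ≃ₗ[k] V := LinearEquiv.ofBijective F ⟨hFinj, hFsurj⟩
  set Finv : Module.End k V := (e.symm : V →ₗ[k] V) with hFinv
  have hFiF : Finv * f = 1 := by ext v; exact e.symm_apply_apply v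
  have hFFi : f * Finv = 1 := by ext v; exact e.apply_symm_apply v
  set D : Module.End k V := f - c • 1 with hD
  set N : Module.End k V := D ^ n with hN2
  set W : Submodule k V := LinearMap.ker N with hW
  set W' : Submodule k V := LinearMap.range N with hW'
  -- disjointness and complementarity
  have hdisj : Disjoint W' W := by
    have := Module.End.generalized_eigenvec_disjoint_range_ker f c
    rwa [Module.End.genEigenrange_nat, Module.End.genEigenspace_nat] at this
  have hcompl : IsCompl W W' := by
    refine ⟨hdisj.symm, ?_⟩
    rw [codisjoint_iff]
    apply Submodule.eq_top_of_disjoint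
    · rw [add_comm]; exact (LinearMap.finrank_range_add_finrank_ker N).ge
    · exact hdisj.symm
  -- invariance
  have hcfD : Commute f D :=
    Commute.sub_right (Commute.refl f) (Commute.smul_right (Commute.one_right f) c)
  have hcfN : Commute f N := hcfD.pow_right n
  have hWmap : ∀ x ∈ W, f x ∈ W := by
    intro x hx
    rw [hW, LinearMap.mem_ker] at hx ⊢
    rw [← Module.End.mul_apply, ← hcfN.eq, Module.End.mul_apply, hx, map_zero]
  have hW'map : ∀ x ∈ W', f x ∈ W' := by
    rintro x ⟨z, rfl⟩
    exact ⟨f z, by rw [← Module.End.mul_apply, ← Module.End.mul_apply, hcfN.eq]⟩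
  set F₁ : Module.End k W := f.restrict hWmap with hF₁
  set F₂ : Module.End k W' := f.restrict hW'map with hF₂
  -- charpoly factorization
  have hcharfact : LinearMap.charpoly f = LinearMap.charpoly F₁ * LinearMap.charpoly F₂ := by
    let e2 := Submodule.prodEquivOfIsCompl W W' hcompl
    have hψ : e2.conj (F₁.prodMap F₂) = f := by
      apply LinearMap.ext
      intro v
      obtain ⟨z, rfl⟩ := e2.surjective v
      rw [LinearEquiv.conj_apply]
      simp only [LinearMap.coe_comp, LinearEquiv.coe_coe, Function.comp_apply,
        e2.symm_apply_apply]
      obtain ⟨w, w'⟩ := z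
      rw [Submodule.coe_prodEquivOfIsCompl', Submodule.coe_prodEquivOfIsCompl']
      rw [LinearMap.prodMap_apply, map_add,
        LinearMap.restrict_coe_apply f hWmap w, LinearMap.restrict_coe_apply f hW'map w']
    rw [← hψ, LinearEquiv.charpoly_conj, LinearMap.charpoly_prodMap]
  -- part 1 : charpoly F₁ = (X - C c) ^ finrank W
  set d := finrank k W with hd
  have hDWmap : ∀ x ∈ W, D x ∈ W := by
    intro x hx
    rw [hW, LinearMap.mem_ker] at hx ⊢
    have hND : N * D = D * N := (Commute.pow_left (Commute.refl D) n).eq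
    rw [← Module.End.mul_apply, hND, Module.End.mul_apply, hx, map_zero]
  have hF₁sub : F₁ - c • 1 = D.restrict hDWmap := by
    apply LinearMap.ext
    intro x
    apply Subtype.ext
    have e1 : (F₁ - c • (1 : Module.End k W)) x = F₁ x - c • x := by
      rw [LinearMap.sub_apply, LinearMap.smul_apply, Module.End.one_apply]
    rw [e1, LinearMap.restrict_coe_apply, AddSubgroupClass.coe_sub, SetLike.val_smul,
      LinearMap.restrict_coe_apply, hD, LinearMap.sub_apply, LinearMap.smul_apply,
      Module.End.one_apply]
  have hnil : (F₁ - c • (1 : Module.End k W)) ^ n = 0 := by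
    rw [hF₁sub, Module.End.pow_restrict]
    apply LinearMap.ext
    intro x
    apply Subtype.ext
    rw [LinearMap.restrict_coe_apply]
    exact x.2
  have hch1 : LinearMap.charpoly F₁ = (X - C c) ^ d := by
    have h1 : LinearMap.charpoly (F₁ - c • (1 : Module.End k W)) = X ^ d :=
      IsNilpotent.charpoly_eq_X_pow_finrank ⟨n, hnil⟩
    rw [my_end_charpoly_shift F₁ c, h1, X_pow_comp]
  -- part 2 : c is not a root of charpoly F₂
  have hroot2 : ¬ (LinearMap.charpoly F₂).IsRoot c := by
    have hinj : LinearMap.ker (c • (1 : Module.End k W') - F₂) = ⊥ := by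
      rw [eq_bot_iff]
      intro w hw
      rw [LinearMap.mem_ker] at hw
      have hcoe : c • (w : V) - f (w : V) = 0 := by
        have := congrArg (Subtype.val) hw
        rw [LinearMap.sub_apply, LinearMap.smul_apply, Module.End.one_apply] at this
        push_cast at this
        rw [LinearMap.restrict_coe_apply] at this
        exact this
      have hker : (w : V) ∈ LinearMap.ker D := by
        rw [LinearMap.mem_ker, hD, LinearMap.sub_apply, LinearMap.smul_apply,
          Module.End.one_apply, sub_eq_zero]
        rw [sub_eq_zero] at hcoe
        exact hcoe.symm
      have hkerN : (w : V) ∈ W := by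
        rw [hW, hN2, hn]
        exact Module.End.ker_pow_le_ker_pow_finrank D 1 (by rwa [pow_one])
      have : (w : V) ∈ W ⊓ W' := ⟨hkerN, w.2⟩
      rw [hcompl.inf_eq_bot, Submodule.mem_bot] at this
      exact Submodule.coe_eq_zero.mp this ▸ rfl
    intro hr
    rw [Polynomial.IsRoot, my_end_charpoly_eval] at hr
    have := LinearMap.bot_lt_ker_of_det_eq_zero hr
    rw [hinj] at this
    exact lt_irrefl _ this
  -- combine
  have hmult : (LinearMap.charpoly f).rootMultiplicity c = d := by
    rw [hcharfact, Polynomial.rootMultiplicity_mul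
      (mul_ne_zero (LinearMap.charpoly_monic F₁).ne_zero (LinearMap.charpoly_monic F₂).ne_zero),
      hch1, Polynomial.rootMultiplicity_X_sub_C_pow,
      Polynomial.rootMultiplicity_eq_zero hroot2, add_zero]
  rw [show LinearMap.charpoly F = LinearMap.charpoly f from rfl, hmult]
  -- part 3 : B restricted to W is nondegenerate, hence d is even
  set H : Module.End k V := c ^ 2 • Finv - c • 1 with hH
  have hkey : ∀ u v : V, B (D u) v = B u (H v) := by
    intro u v
    have h2 : f (Finv v) = v := by
      have h3 := congrArg (fun g : Module.End k V => g v) hFFi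
      simpa using h3
    have hfB : B (f u) v = c ^ 2 * B u (Finv v) := by
      conv_lhs => rw [← h2]
      exact hF u (Finv v)
    have lhs : B (D u) v = B (f u) v - c * B u v := by
      rw [hD, LinearMap.sub_apply, LinearMap.smul_apply, Module.End.one_apply, map_sub,
        LinearMap.sub_apply, map_smul, LinearMap.smul_apply, smul_eq_mul]
    have rhs : B u (H v) = c ^ 2 * B u (Finv v) - c * B u v := by
      rw [hH, LinearMap.sub_apply, LinearMap.smul_apply, LinearMap.smul_apply,
        Module.End.one_apply, map_sub, map_smul, map_smul, smul_eq_mul, smul_eq_mul]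
    rw [lhs, rhs, hfB]
  have hkeypow : ∀ (m : ℕ) (u v : V), B ((D ^ m) u) v = B u ((H ^ m) v) := by
    intro m
    induction m with
    | zero => intro u v; simp
    | succ m ih =>
      intro u v
      have h1 : (D ^ (m + 1)) u = (D ^ m) (D u) := by
        rw [← Module.End.mul_apply, ← pow_succ]
      have h2 : (H ^ (m + 1)) v = H ((H ^ m) v) := by
        rw [← Module.End.mul_apply, ← pow_succ']
      rw [h1, h2, ih (D u) v, hkey]
  -- commutation facts
  have hcFif : Commute Finv f := by rw [Commute, SemiconjBy, hFiF, hFFi]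
  have hcFiD : Commute Finv D :=
    Commute.sub_right hcFif (Commute.smul_right (Commute.one_right Finv) c)
  have hHn : H ^ n = (-c) ^ n • (Finv ^ n * D ^ n) := by
    have h1 : H = (-c) • (Finv * D) := by
      rw [hH, hD, mul_sub, hFiF, mul_smul_comm, mul_one, smul_sub, smul_smul]
      simp only [neg_smul, neg_mul, sub_neg_eq_add]
      rw [← pow_two]
      abel
    rw [h1, _root_.smul_pow, hcFiD.mul_pow]
  have hFifn : Finv ^ n * f ^ n = 1 := by
    rw [← hcFif.mul_pow, hFiF, one_pow]
  have hBx0 : ∀ x ∈ W, ∀ w' ∈ W', B x w' = 0 := by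
    rintro x hx w' ⟨z, rfl⟩
    set y : V := ((-c) ^ n)⁻¹ • ((f ^ n) z) with hy0
    have hy : (H ^ n) y = N z := by
      rw [hHn, hy0, LinearMap.smul_apply, map_smul, smul_smul,
        mul_inv_cancel₀ (pow_ne_zero n (neg_ne_zero.mpr hc)), one_smul, Module.End.mul_apply]
      have h2 : (D ^ n) ((f ^ n) z) = (f ^ n) ((D ^ n) z) := by
        rw [← Module.End.mul_apply, ← Module.End.mul_apply, (hcfD.pow_pow n n).eq]
      rw [h2, ← Module.End.mul_apply, hFifn, Module.End.one_apply, hN2]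
    have hDx : (D ^ n) x = 0 := LinearMap.mem_ker.mp hx
    calc B x (N z) = B x ((H ^ n) y) := by rw [hy]
      _ = B ((D ^ n) x) y := (hkeypow n x y).symm
      _ = 0 := by rw [hDx, map_zero, LinearMap.zero_apply]
  have hBWnd : ((LinearMap.BilinForm.restrict B W)).Nondegenerate := by
    refine (LinearMap.IsRefl.nondegenerate_iff_separatingLeft
      (LinearMap.IsAlt.isRefl (B := LinearMap.BilinForm.restrict B W) (fun z => halt (z : V)))).mpr ?_
    intro x hxall
    have hx0 : (x : V) = 0 := by
      apply hB1
      intro v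
      obtain ⟨w, w', hw, hw', rfl⟩ := Submodule.codisjoint_iff_exists_add_eq.mp hcompl.codisjoint v
      rw [map_add]
      have h1 : B (x : V) w = 0 := hxall ⟨w, hw⟩
      rw [h1, hBx0 (x : V) x.2 w' hw', add_zero]
    exact Subtype.ext hx0
  exact my_even_finrank_of_alt_nondeg d W rfl (LinearMap.BilinForm.restrict B W) hBWnd
    (fun z => halt (z : V))
end

section
/- Let k be a field, V a finite-dimensional k-vector space, B : V → V → k a nondegenerate alternating bilinear form (B(x, x) = 0 for all x), F : V → V a linear endomorphism, and c ∈ k nonzero, such that B(Fx, Fy) = c²·B(x, y) for all x, y ∈ V. Then det F = c^{dim V}. -/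
open Equiv Finset

namespace Stmt9

variable {k V : Type*} [Field k] [AddCommGroup V] [Module k V]
variable {η : Type*} [Fintype η] [DecidableEq η]

/-- The pairing involution on `η × Bool`. -/
def pr (η : Type*) : Equiv.Perm (η × Bool) :=
  ⟨fun x => (x.1, !x.2), fun x => (x.1, !x.2), fun x => by simp, fun x => by simp⟩

set_option linter.unusedSectionVars false in
@[simp] lemma pr_apply (x : η × Bool) : pr η x = (x.1, !x.2) := rfl

variable (B : V →ₗ[k] V →ₗ[k] k)

/-- One summand of the Pfaffian form. -/
def pfTerm (σ : Equiv.Perm (η × Bool)) (v : η × Bool → V) : k :=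
  ((Equiv.Perm.sign σ : ℤ) : k) * ∏ i : η, B (v (σ (i, false))) (v (σ (i, true)))

lemma centralizer_comm {τ : Equiv.Perm (η × Bool)}
    (hτ : τ ∈ Subgroup.centralizer {pr η}) (x : η × Bool) :
    τ (pr η x) = pr η (τ x) := by
  have h2 : pr η * τ = τ * pr η := hτ (pr η) rfl
  have := congrArg (fun e => e x) h2
  simpa [Equiv.Perm.mul_apply] using this.symm

end Stmt9

namespace Stmt9

open Equiv Finset

variable {k V : Type*} [Field k] [AddCommGroup V] [Module k V]
variable {η : Type*} [Fintype η] [DecidableEq η]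
variable (B : V →ₗ[k] V →ₗ[k] k)

set_option linter.unusedSectionVars false

lemma pfTerm_mul_centralizer (hskew : ∀ x y : V, B y x = - B x y)
    (σ τ : Equiv.Perm (η × Bool)) (hτ : τ ∈ Subgroup.centralizer {pr η})
    (v : η × Bool → V) : pfTerm B (σ * τ) v = pfTerm B σ v := by
  classical
  set s : η → Bool := fun i => (τ (i, false)).2 with hs
  set tb : η → η := fun i => (τ (i, false)).1 with htb
  have key1 : ∀ i, τ (i, false) = (tb i, s i) := fun i => rfl
  have key2 : ∀ i, τ (i, true) = (tb i, !s i) := by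
    intro i
    have : τ (pr η (i, false)) = pr η (τ (i, false)) := centralizer_comm hτ _
    simpa [key1 i] using this
  have hinj : Function.Injective tb := by
    intro i j hij
    by_cases hsij : s i = s j
    · have : τ (i, false) = τ (j, false) := by rw [key1, key1, hij, hsij]
      exact (Prod.ext_iff.mp (τ.injective this)).1
    · exfalso
      have hsj : s j = !s i := by revert hsij; cases s i <;> cases s j <;> simp
      have : τ (j, false) = τ (i, true) := by
        rw [key1, key2, hij, hsj]
      have := τ.injective this
      simp at this
  have hbij : Function.Bijective tb := Finite.injective_iff_bijective.mp hinj
  set tbE : Equiv.Perm η := Equiv.ofBijective tb hbij with htbE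
  have htbEa : ∀ i, tbE i = tb i := fun i => rfl
  set P : Equiv.Perm (η × Bool) := Equiv.prodCongrLeft (fun _ : Bool => tbE) with hP
  set Qp : Equiv.Perm (η × Bool) :=
    Equiv.prodCongrRight (fun i => if s i then Equiv.swap false true else 1) with hQp
  have hdecomp : τ = P * Qp := by
    apply Equiv.ext
    rintro ⟨i, b⟩
    have : (P * Qp) (i, b) = (tb i, (if s i then Equiv.swap false true else 1) b) := by
      simp [Equiv.Perm.mul_apply, hP, hQp, Equiv.prodCongrRight_apply,
        Equiv.prodCongrLeft_apply, htbEa]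
    rw [this]
    cases b <;> cases hsi : s i <;>
      simp [key1, key2, hsi, Equiv.swap_apply_of_ne_of_ne]
  have hsgnτ : ((Equiv.Perm.sign τ : ℤ) : k) = ∏ i : η, (if s i then (-1 : k) else 1) := by
    rw [hdecomp, map_mul]
    have h1 : Equiv.Perm.sign P = 1 := by
      rw [hP, Equiv.Perm.sign_prodCongrLeft]
      rw [Finset.prod_const]
      simp [Int.units_sq]
    have h2 : Equiv.Perm.sign Qp = ∏ i : η, (if s i then (-1 : ℤˣ) else 1) := by
      rw [hQp, Equiv.Perm.sign_prodCongrRight]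
      congr 1
      ext i
      cases hsi : s i <;> simp [hsi, Equiv.Perm.sign_swap]
    rw [h1, h2, one_mul]
    push_cast [apply_ite]
    simp
  have hprod : (∏ i : η, B (v ((σ * τ) (i, false))) (v ((σ * τ) (i, true))))
      = (∏ i : η, (if s i then (-1 : k) else 1))
        * ∏ i : η, B (v (σ (i, false))) (v (σ (i, true))) := by
    have step1 : (∏ i : η, B (v ((σ * τ) (i, false))) (v ((σ * τ) (i, true))))
        = ∏ i : η, ((if s i then (-1 : k) else 1)
            * B (v (σ (tb i, false))) (v (σ (tb i, true)))) := by
      refine Finset.prod_congr rfl fun i _ => ?_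
      rw [Equiv.Perm.mul_apply, Equiv.Perm.mul_apply, key1, key2]
      cases hsi : s i
      · simp
      · simp only [Bool.not_true, if_true]
        rw [hskew (v (σ (tb i, false))) (v (σ (tb i, true)))]
        ring
    rw [step1, Finset.prod_mul_distrib]
    congr 1
    exact Equiv.prod_comp tbE (fun j => B (v (σ (j, false))) (v (σ (j, true))))
  have hsq : (∏ i : η, (if s i then (-1 : k) else 1))
      * (∏ i : η, (if s i then (-1 : k) else 1)) = 1 := by
    rw [← Finset.prod_mul_distrib]
    apply Finset.prod_eq_one
    intro i _
    cases s i <;> simp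
  have hsgn2 : ((Equiv.Perm.sign (σ * τ) : ℤ) : k)
      = ((Equiv.Perm.sign σ : ℤ) : k) * ∏ i : η, (if s i then (-1 : k) else 1) := by
    rw [map_mul]
    push_cast
    rw [hsgnτ]
  unfold pfTerm
  rw [hsgn2, hprod]
  calc ((Equiv.Perm.sign σ : ℤ) : k) * (∏ i : η, (if s i then (-1 : k) else 1))
        * ((∏ i : η, (if s i then (-1 : k) else 1))
          * ∏ i : η, B (v (σ (i, false))) (v (σ (i, true))))
      = ((∏ i : η, (if s i then (-1 : k) else 1))
          * (∏ i : η, (if s i then (-1 : k) else 1)))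
        * (((Equiv.Perm.sign σ : ℤ) : k)
          * ∏ i : η, B (v (σ (i, false))) (v (σ (i, true)))) := by ring
    _ = _ := by rw [hsq, one_mul]


/-- quotient of the permutation group by the centralizer of the pairing. -/
abbrev QT (η : Type*) := Equiv.Perm (η × Bool) ⧸ Subgroup.centralizer {pr η}

noncomputable instance : Fintype (QT η) := Fintype.ofFinite _

/-- lift of `pfTerm` to the quotient. -/
def pfQ (hskew : ∀ x y : V, B y x = - B x y) (v : η × Bool → V) (q : QT η) : k :=
  Quotient.liftOn' q (fun σ => pfTerm B σ v) (by
    intro a b hab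
    have h : a⁻¹ * b ∈ Subgroup.centralizer {pr η} := QuotientGroup.leftRel_apply.mp hab
    have hb : b = a * (a⁻¹ * b) := by group
    show pfTerm B a v = pfTerm B b v
    conv_rhs => rw [hb]
    exact (pfTerm_mul_centralizer B hskew a _ h v).symm)

lemma pfQ_mk (hskew : ∀ x y : V, B y x = - B x y) (v : η × Bool → V)
    (σ : Equiv.Perm (η × Bool)) :
    pfQ B hskew v (QuotientGroup.mk σ) = pfTerm B σ v := rfl

lemma prod_update_eq (σ : Equiv.Perm (η × Bool)) (v : η × Bool → V) (x : η × Bool) (a : V) :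
    (∏ i : η, B (Function.update v x a (σ (i, false))) (Function.update v x a (σ (i, true))))
    = (if (σ.symm x).2 then B (v (σ ((σ.symm x).1, false))) a
        else B a (v (σ ((σ.symm x).1, true))))
      * ∏ i ∈ Finset.univ.erase (σ.symm x).1,
          B (v (σ (i, false))) (v (σ (i, true))) := by
  classical
  set j := (σ.symm x).1 with hj
  set bb := (σ.symm x).2 with hbb
  have hx : σ (j, bb) = x := by
    rw [hj, hbb]
    simp
  rw [← Finset.mul_prod_erase Finset.univ _ (Finset.mem_univ j)]
  have hne : ∀ (i : η) (c c' : Bool), (i, c) ≠ (j, bb) → σ (i, c) ≠ x := by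
    intro i c c' h hcontra
    exact h (σ.injective (hcontra.trans hx.symm))
  congr 1
  · cases hbb' : bb
    · rw [hbb'] at hx
      have h1 : Function.update v x a (σ (j, false)) = a := by rw [hx]; simp
      have h2 : σ (j, true) ≠ x := hne j true true (by simp [hbb'])
      rw [h1, Function.update_of_ne h2]
      simp [hbb']
    · rw [hbb'] at hx
      have h1 : Function.update v x a (σ (j, true)) = a := by rw [hx]; simp
      have h2 : σ (j, false) ≠ x := hne j false false (by simp [hbb'])
      rw [h1, Function.update_of_ne h2]
      simp [hbb']
  · refine Finset.prod_congr rfl fun i hi => ?_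
    have hij : i ≠ j := (Finset.mem_erase.mp hi).1
    rw [Function.update_of_ne (hne i false false (by simp [hij])),
      Function.update_of_ne (hne i true true (by simp [hij]))]


lemma pfTerm_update_add (σ : Equiv.Perm (η × Bool)) (v : η × Bool → V) (x : η × Bool)
    (a b : V) :
    pfTerm B σ (Function.update v x (a + b))
      = pfTerm B σ (Function.update v x a) + pfTerm B σ (Function.update v x b) := by
  unfold pfTerm
  rw [prod_update_eq, prod_update_eq, prod_update_eq]
  cases h : (σ.symm x).2 <;>
    simp only [h, if_false, if_true, Bool.false_eq_true, map_add, LinearMap.add_apply] <;>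
    ring

lemma pfTerm_update_smul (σ : Equiv.Perm (η × Bool)) (v : η × Bool → V) (x : η × Bool)
    (t : k) (a : V) :
    pfTerm B σ (Function.update v x (t • a)) = t * pfTerm B σ (Function.update v x a) := by
  unfold pfTerm
  rw [prod_update_eq, prod_update_eq]
  cases h : (σ.symm x).2 <;>
    simp only [h, if_false, if_true, Bool.false_eq_true, map_smul, LinearMap.smul_apply,
      smul_eq_mul] <;>
    ring

/-- The Pfaffian multilinear map attached to `B`. -/
noncomputable def pfML (hskew : ∀ x y : V, B y x = - B x y) :
    MultilinearMap k (fun _ : η × Bool => V) k where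
  toFun v := ∑ q : QT η, pfQ B hskew v q
  map_update_add' := by
    intro dec v x a b
    have hdec : dec = instDecidableEqProd := Subsingleton.elim _ _
    subst hdec
    rw [← Finset.sum_add_distrib]
    refine Finset.sum_congr rfl fun q _ => ?_
    obtain ⟨σ⟩ := q
    exact pfTerm_update_add B σ v x a b
  map_update_smul' := by
    intro dec v x t a
    have hdec : dec = instDecidableEqProd := Subsingleton.elim _ _
    subst hdec
    rw [Finset.smul_sum]
    refine Finset.sum_congr rfl fun q _ => ?_
    obtain ⟨σ⟩ := q
    rw [smul_eq_mul]
    exact pfTerm_update_smul B σ v x t a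


lemma pfTerm_swap_mul (x y : η × Bool) (hxy : x ≠ y) (σ : Equiv.Perm (η × Bool))
    (v : η × Bool → V) (hv : v x = v y) :
    pfTerm B (Equiv.swap x y * σ) v = - pfTerm B σ v := by
  have hvs : ∀ z, v (Equiv.swap x y z) = v z := by
    intro z
    rcases eq_or_ne z x with rfl | h1
    · rw [Equiv.swap_apply_left, hv]
    rcases eq_or_ne z y with rfl | h2
    · rw [Equiv.swap_apply_right, hv]
    · rw [Equiv.swap_apply_of_ne_of_ne h1 h2]
  unfold pfTerm
  have h1 : ((Equiv.Perm.sign (Equiv.swap x y * σ) : ℤ) : k)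
      = - ((Equiv.Perm.sign σ : ℤ) : k) := by
    rw [map_mul, Equiv.Perm.sign_swap hxy]
    push_cast
    ring
  rw [h1]
  have h2 : (∏ i : η, B (v ((Equiv.swap x y * σ) (i, false)))
        (v ((Equiv.swap x y * σ) (i, true))))
      = ∏ i : η, B (v (σ (i, false))) (v (σ (i, true))) := by
    refine Finset.prod_congr rfl fun i _ => ?_
    rw [Equiv.Perm.mul_apply, Equiv.Perm.mul_apply, hvs, hvs]
  rw [h2]
  ring

lemma swap_mem_centralizer {x y : η × Bool} (hxy : x ≠ y)
    (h : Equiv.swap x y ∈ Subgroup.centralizer {pr η}) : y = pr η x := by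
  have hc := centralizer_comm h y
  have hpry : pr η y ≠ y := by
    intro hcon
    have := congrArg Prod.snd hcon
    simp at this
  rw [Equiv.swap_apply_right] at hc
  rcases eq_or_ne (pr η y) x with h1 | h1
  · rw [h1, Equiv.swap_apply_left] at hc
    rw [hc]
  · rw [Equiv.swap_apply_of_ne_of_ne h1 hpry] at hc
    exact absurd ((pr η).injective hc) (Ne.symm hxy)

lemma pfSum_alt (hskew : ∀ x y : V, B y x = - B x y) (halt : ∀ z : V, B z z = 0)
    (v : η × Bool → V) (x y : η × Bool) (hv : v x = v y) (hxy : x ≠ y) :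
    ∑ q : QT η, pfQ B hskew v q = 0 := by
  classical
  set sw : QT η → QT η := fun q => Quotient.map'
    (fun σ => Equiv.swap x y * σ)
    (fun a b hab => by
      have h : a⁻¹ * b ∈ Subgroup.centralizer {pr η} := QuotientGroup.leftRel_apply.mp hab
      apply QuotientGroup.leftRel_apply.mpr
      simpa [mul_assoc] using h) q with hsw
  have hswmk : ∀ σ : Equiv.Perm (η × Bool),
      sw (QuotientGroup.mk σ) = QuotientGroup.mk (Equiv.swap x y * σ) := fun σ => rfl
  refine Finset.sum_involution (fun q _ => sw q) ?_ ?_ (fun q _ => Finset.mem_univ _) ?_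
  · intro q _
    obtain ⟨σ⟩ := q
    show pfTerm B σ v + pfTerm B (Equiv.swap x y * σ) v = 0
    rw [pfTerm_swap_mul B x y hxy σ v hv]
    ring
  · intro q _ hq hfix
    apply hq
    obtain ⟨σ⟩ := q
    have hrel : (Equiv.swap x y * σ)⁻¹ * σ ∈ Subgroup.centralizer {pr η} := by
      have : (QuotientGroup.mk (Equiv.swap x y * σ) : QT η) = QuotientGroup.mk σ := hfix
      exact QuotientGroup.leftRel_apply.mp (Quotient.exact' this)
    have hconj : (Equiv.swap x y * σ)⁻¹ * σ
        = Equiv.swap (σ⁻¹ x) (σ⁻¹ y) := by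
      rw [Equiv.swap_apply_apply σ⁻¹ x y, mul_inv_rev, Equiv.swap_inv, inv_inv]
    rw [hconj] at hrel
    have hxy' : σ⁻¹ x ≠ σ⁻¹ y := fun h => hxy (σ⁻¹.injective h)
    have hpr : σ⁻¹ y = pr η (σ⁻¹ x) := swap_mem_centralizer hxy' hrel
    -- now the term vanishes
    show pfTerm B σ v = 0
    unfold pfTerm
    set j := (σ⁻¹ x).1 with hj
    have hfac : B (v (σ (j, false))) (v (σ (j, true))) = 0 := by
      cases hb : (σ⁻¹ x).2
      · have h1 : σ⁻¹ x = (j, false) := by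
          rw [hj, ← hb]
        have hxj : σ (j, false) = x := by
          rw [← h1, Equiv.Perm.coe_inv, Equiv.apply_symm_apply]
        have h2 : σ⁻¹ y = (j, true) := by
          rw [hpr, pr_apply, hb, ← hj]
          rfl
        have hyj : σ (j, true) = y := by
          rw [← h2, Equiv.Perm.coe_inv, Equiv.apply_symm_apply]
        rw [hxj, hyj, ← hv, halt]
      · have h1 : σ⁻¹ x = (j, true) := by
          rw [hj, ← hb]
        have hxj : σ (j, true) = x := by
          rw [← h1, Equiv.Perm.coe_inv, Equiv.apply_symm_apply]
        have h2 : σ⁻¹ y = (j, false) := by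
          rw [hpr, pr_apply, hb, ← hj]
          rfl
        have hyj : σ (j, false) = y := by
          rw [← h2, Equiv.Perm.coe_inv, Equiv.apply_symm_apply]
        rw [hxj, hyj, ← hv, halt]
    rw [Finset.prod_eq_zero (Finset.mem_univ j) hfac]
    ring
  · intro q _
    obtain ⟨σ⟩ := q
    show sw (QuotientGroup.mk (Equiv.swap x y * σ)) = QuotientGroup.mk σ
    rw [hswmk]
    congr 1
    rw [← mul_assoc, Equiv.swap_mul_self, one_mul]

/-- The Pfaffian alternating map attached to an alternating bilinear form. -/
noncomputable def pfAlt (halt : ∀ z : V, B z z = 0) (hskew : ∀ x y : V, B y x = - B x y) :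
    V [⋀^(η × Bool)]→ₗ[k] k :=
  { pfML B hskew with
    map_eq_zero_of_eq' := fun v x y hv hxy => pfSum_alt B hskew halt v x y hv hxy }

lemma pfAlt_apply (halt : ∀ z : V, B z z = 0) (hskew : ∀ x y : V, B y x = - B x y)
    (v : η × Bool → V) :
    pfAlt B halt hskew v = ∑ q : QT η, pfQ B hskew v q := rfl


lemma pr_pr (x : η × Bool) : pr η (pr η x) = x := by
  cases x with
  | mk i b => simp

lemma pfAlt_map_comp (halt : ∀ z : V, B z z = 0) (hskew : ∀ x y : V, B y x = - B x y)
    (F : V →ₗ[k] V) (c : k) (hF : ∀ x y : V, B (F x) (F y) = c ^ 2 * B x y)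
    (v : η × Bool → V) :
    pfAlt B halt hskew (fun x => F (v x))
      = (c ^ 2) ^ (Fintype.card η) * pfAlt B halt hskew v := by
  rw [pfAlt_apply, pfAlt_apply, Finset.mul_sum]
  refine Finset.sum_congr rfl fun q _ => ?_
  obtain ⟨σ⟩ := q
  show pfTerm B σ (fun x => F (v x)) = (c ^ 2) ^ (Fintype.card η) * pfTerm B σ v
  unfold pfTerm
  have : (∏ i : η, B (F (v (σ (i, false)))) (F (v (σ (i, true)))))
      = ∏ i : η, (c ^ 2 * B (v (σ (i, false))) (v (σ (i, true)))) :=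
    Finset.prod_congr rfl fun i _ => hF _ _
  rw [this, Finset.prod_mul_distrib, Finset.prod_const, Finset.card_univ]
  ring

lemma not_centralizer {σ : Equiv.Perm (η × Bool)}
    (hσ : σ ∉ Subgroup.centralizer {pr η}) :
    ∃ i : η, σ (i, true) ≠ pr η (σ (i, false)) := by
  by_contra hcon
  push_neg at hcon
  apply hσ
  intro g hg
  rcases hg with rfl
  apply Equiv.ext
  rintro ⟨i, b⟩
  cases b
  · show (pr η) (σ (i, false)) = σ (pr η (i, false))
    rw [← hcon i]
    rfl
  · show (pr η) (σ (i, true)) = σ (pr η (i, true))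
    rw [hcon i, pr_pr]
    rfl

lemma pfAlt_sympl (halt : ∀ z : V, B z z = 0) (hskew : ∀ x y : V, B y x = - B x y)
    (e : η × Bool → V) (hpair : ∀ i : η, B (e (i, false)) (e (i, true)) = 1)
    (hzero : ∀ x y : η × Bool, y ≠ pr η x → B (e x) (e y) = 0) :
    pfAlt B halt hskew e = 1 := by
  rw [pfAlt_apply]
  rw [Finset.sum_eq_single (QuotientGroup.mk 1 : QT η)]
  · show pfTerm B 1 e = 1
    unfold pfTerm
    simp [hpair]
  · intro q _ hq
    obtain ⟨σ⟩ := q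
    have hσ : σ ∉ Subgroup.centralizer {pr η} := by
      intro hmem
      apply hq
      show _ = _
      apply Quotient.sound'
      apply QuotientGroup.leftRel_apply.mpr
      simpa using hmem
    obtain ⟨i, hi⟩ := not_centralizer hσ
    show pfTerm B σ e = 0
    unfold pfTerm
    have hfac : B (e (σ (i, false))) (e (σ (i, true))) = 0 := hzero _ _ hi
    rw [Finset.prod_eq_zero (Finset.mem_univ i) hfac]
    ring
  · intro h
    exact absurd (Finset.mem_univ _) h


/-- Index gluing equivalence. -/
def optEquiv (η' : Type*) : Bool ⊕ (η' × Bool) ≃ (Option η') × Bool where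
  toFun x := Sum.elim (fun b => (none, b)) (fun p => (some p.1, p.2)) x
  invFun p := match p with
    | (none, b) => Sum.inl b
    | (some i, b) => Sum.inr (i, b)
  left_inv := by rintro (b | ⟨i, b⟩) <;> rfl
  right_inv := by rintro ⟨(_ | i), b⟩ <;> rfl

universe u v

lemma exists_sympl (k : Type u) [Field k] :
    ∀ (n : ℕ) (V : Type v) [AddCommGroup V] [Module k V] [FiniteDimensional k V]
      (B : V →ₗ[k] V →ₗ[k] k),
      (∀ x : V, (∀ y : V, B x y = 0) → x = 0) → (∀ z : V, B z z = 0) →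
      Module.finrank k V = n →
      ∃ (η : Type) (_ : Fintype η) (_ : DecidableEq η) (e : Module.Basis (η × Bool) k V),
        (∀ i : η, B (e (i, false)) (e (i, true)) = 1) ∧
        ∀ x y : η × Bool, y ≠ pr η x → B (e x) (e y) = 0 := by
  intro n
  induction n using Nat.strong_induction_on with
  | _ n ih =>
    intro V _ _ _ B hB1 halt hn
    have hskew : ∀ x y : V, B y x = - B x y := by
      intro x y
      have h := halt (x + y)
      simp only [map_add, LinearMap.add_apply] at h
      rw [halt, halt] at h
      linear_combination h
    rcases subsingleton_or_nontrivial V with hV | hV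
    · refine ⟨PEmpty.{1}, inferInstance, inferInstance, Module.Basis.empty V, ?_, ?_⟩
      · exact fun i => i.elim
      · exact fun x _ _ => x.1.elim
    · -- pick a hyperbolic pair
      obtain ⟨x, hx⟩ := exists_ne (0 : V)
      have hy : ∃ y, B x y ≠ 0 := by
        by_contra hcon
        push_neg at hcon
        exact hx (hB1 x hcon)
      obtain ⟨y, hy⟩ := hy
      set y' : V := (B x y)⁻¹ • y with hy'
      have hxy' : B x y' = 1 := by
        rw [hy', map_smul, smul_eq_mul, inv_mul_cancel₀ hy]
      have hy'x : B y' x = -1 := by rw [hskew, hxy']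
      set u : Bool → V := fun b => cond b y' x with hu
      have humem : ∀ b : Bool, u b ∈ Submodule.span k (Set.range u) :=
        fun b => Submodule.subset_span ⟨b, rfl⟩
      have hBu : ∀ w : V, B x w = 0 → B y' w = 0 → (∀ z ∈ Submodule.span k (Set.range u), B z w = 0) := by
        intro w h1 h2 z hz
        induction hz using Submodule.span_induction with
        | mem z hzz => obtain ⟨b, rfl⟩ := hzz; cases b
                       · exact h1
                       · exact h2
        | zero => simp
        | add a b _ _ ha hb => simp [map_add, ha, hb]
        | smul t a _ ha => simp [map_smul, ha]
      have hli : LinearIndependent k u := by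
        rw [Fintype.linearIndependent_iff]
        intro g hg
        have hg' : g true • y' + g false • x = 0 := by
          rw [← hg, Fintype.sum_bool]
          rfl
        have h1 : g true = 0 := by
          have : B x (g true • y' + g false • x) = 0 := by rw [hg']; simp
          simpa [map_add, map_smul, hxy', halt] using this
        have h2 : g false = 0 := by
          have : B y' (g true • y' + g false • x) = 0 := by rw [hg']; simp
          simpa [map_add, map_smul, hy'x, halt] using this
        intro b; cases b
        · exact h2
        · exact h1
      set U : Submodule k V := Submodule.span k (Set.range u) with hU
      set bU : Module.Basis Bool k U := Module.Basis.span hli with hbUdef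
      have hbU : ∀ b : Bool, (bU b : V) = u b := fun b => congrArg Subtype.val (Module.Basis.span_apply hli b)
      have hrefl : B.IsRefl := fun a b h => by rw [hskew, h, neg_zero]
      have hUnd : (LinearMap.BilinForm.restrict B U).Nondegenerate := by
        refine (LinearMap.IsRefl.nondegenerate_iff_separatingLeft (B := LinearMap.BilinForm.restrict B U) (fun a b h => hrefl _ _ h)).mpr ?_
        intro z hz
        have hzx : B (z : V) x = 0 := hz ⟨x, humem false⟩
        have hzy : B (z : V) y' = 0 := hz ⟨y', humem true⟩
        have h1 : B x (z : V) = 0 := hrefl _ _ hzx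
        have h2 : B y' (z : V) = 0 := hrefl _ _ hzy
        have : (z : V) = 0 := by
          obtain ⟨g, hgz⟩ := (Submodule.mem_span_range_iff_exists_fun k).mp z.2
          have hgz' : g true • y' + g false • x = (z : V) := by
            rw [← hgz, Fintype.sum_bool]
            rfl
          have hgt : g true = 0 := by
            have := h1
            rw [← hgz'] at this
            simpa [map_add, map_smul, hxy', halt] using this
          have hgf : g false = 0 := by
            have := h2
            rw [← hgz'] at this
            simpa [map_add, map_smul, hy'x, halt] using this
          rw [← hgz', hgt, hgf]
          simp
        exact Subtype.ext this
      have hcompl : IsCompl U (LinearMap.BilinForm.orthogonal B U) :=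
        LinearMap.BilinForm.isCompl_orthogonal_of_restrict_nondegenerate hrefl hUnd
      set W : Submodule k V := LinearMap.BilinForm.orthogonal B U with hW
      have hBnd : LinearMap.BilinForm.Nondegenerate B := (hrefl.nondegenerate_iff_separatingLeft).mpr fun m hm => hB1 m hm
      have hWnd : (LinearMap.BilinForm.restrict B W).Nondegenerate := by
        apply LinearMap.BilinForm.nondegenerate_restrict_of_disjoint_orthogonal B hrefl
        rw [hW, LinearMap.BilinForm.orthogonal_orthogonal hBnd hrefl]
        exact hcompl.disjoint.symm
      have halt_W : ∀ z : W, (LinearMap.BilinForm.restrict B W) z z = 0 := fun z => halt z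
      have hr2 : Module.finrank k U = 2 := by
        rw [Module.finrank_eq_card_basis bU]
        simp
      have hsum : Module.finrank k U + Module.finrank k W = Module.finrank k V :=
        Submodule.finrank_add_eq_of_isCompl hcompl
      have hlt : Module.finrank k W < n := by omega
      obtain ⟨η', i1, i2, bW, hp', hz'⟩ :=
        ih (Module.finrank k W) hlt W (LinearMap.BilinForm.restrict B W) hWnd.1 halt_W rfl
      -- assemble the basis of V
      set e : Module.Basis ((Option η') × Bool) k V :=
        ((bU.prod bW).map (Submodule.prodEquivOfIsCompl U W hcompl)).reindex (optEquiv η')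
        with he_def
      have heN : ∀ b : Bool, e (none, b) = u b := by
        intro b
        rw [he_def, Module.Basis.reindex_apply, Module.Basis.map_apply]
        have : (optEquiv η').symm (none, b) = Sum.inl b := rfl
        rw [this]
        simp [Module.Basis.prod_apply, Submodule.coe_prodEquivOfIsCompl', hbU]
      have heS : ∀ (i : η') (b : Bool), e (some i, b) = (bW (i, b) : V) := by
        intro i b
        rw [he_def, Module.Basis.reindex_apply, Module.Basis.map_apply]
        have : (optEquiv η').symm (some i, b) = Sum.inr (i, b) := rfl
        rw [this]
        simp [Module.Basis.prod_apply, Submodule.coe_prodEquivOfIsCompl']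
      have hWmem : ∀ p : η' × Bool, (bW p : V) ∈ LinearMap.BilinForm.orthogonal B U := fun p => (bW p).2
      refine ⟨Option η', inferInstance, inferInstance, e, ?_, ?_⟩
      · rintro (_ | i)
        · rw [heN, heN]
          exact hxy'
        · rw [heS, heS]
          exact hp' i
      · rintro ⟨(_ | i), b⟩ ⟨(_ | j), b'⟩ hne
        · -- both in U
          have hbb : b' = b := by
            by_contra hcon
            apply hne
            have : b' = !b := by revert hcon; cases b <;> cases b' <;> simp
            rw [this]
            rfl
          subst hbb
          rw [heN]
          exact halt _
        · -- U against W
          rw [heN, heS]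
          exact hWmem (j, b') (u b) (humem b)
        · -- W against U
          rw [heS, heN]
          exact hrefl _ _ (hWmem (i, b) (u b') (humem b'))
        · -- both in W
          rw [heS, heS]
          refine hz' (i, b) (j, b') ?_
          intro hcon
          apply hne
          rw [show ((some j, b') : Option η' × Bool) = (some j, b') from rfl]
          have : pr (Option η') (some i, b) = (some i, !b) := rfl
          rw [this]
          rw [Prod.ext_iff] at hcon ⊢
          exact ⟨congrArg some hcon.1, hcon.2⟩

end Stmt9

/-- Let `k` be a field, `V` a finite-dimensional `k`-vector space, `B` a
nondegenerate alternating bilinear form on `V`, `F` an endomorphism, and `c ≠ 0` in `k`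
with `B (F x) (F y) = c^2 * B x y` for all `x y`. Then `det F = c ^ dim V`. -/
theorem stmt_9 (k : Type*) [Field k]
    (V : Type*) [AddCommGroup V] [Module k V] [FiniteDimensional k V]
    (B : V →ₗ[k] V →ₗ[k] k)
    (hB1 : ∀ x : V, (∀ y : V, B x y = 0) → x = 0)
    (hB2 : ∀ y : V, (∀ x : V, B x y = 0) → y = 0)
    (halt : ∀ x : V, B x x = 0)
    (F : V →ₗ[k] V) (c : k) (hc : c ≠ 0)
    (hF : ∀ x y : V, B (F x) (F y) = c ^ 2 * B x y) :
    LinearMap.det F = c ^ (Module.finrank k V) := by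
  classical
  have hskew : ∀ x y : V, B y x = - B x y := by
    intro x y
    have h := halt (x + y)
    simp only [map_add, LinearMap.add_apply] at h
    rw [halt, halt] at h
    linear_combination h
  obtain ⟨η, i1, i2, e, hpair, hzero⟩ :=
    Stmt9.exists_sympl k (Module.finrank k V) V B hB1 halt rfl
  have hcard : Module.finrank k V = 2 * Fintype.card η := by
    rw [Module.finrank_eq_card_basis e, Fintype.card_prod, Fintype.card_bool]
    ring
  set ω : V [⋀^(η × Bool)]→ₗ[k] k := Stmt9.pfAlt B halt hskew with hω
  have h1 : ω e = 1 := Stmt9.pfAlt_sympl B halt hskew e hpair hzero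
  have h2 : ω (fun x => F (e x)) = (c ^ 2) ^ (Fintype.card η) := by
    rw [hω, Stmt9.pfAlt_map_comp B halt hskew F c hF e]
    rw [← hω, h1, mul_one]
  have h3 : ω = ω e • e.det := AlternatingMap.eq_smul_basis_det e ω
  have h4 : ω (fun x => F (e x)) = LinearMap.det F := by
    rw [h3, h1]
    show (1 : k) • (e.det (fun x => F (e x))) = LinearMap.det F
    rw [one_smul]
    have : (fun x => F (e x)) = F ∘ e := rfl
    rw [this, Module.Basis.det_comp, Module.Basis.det_self, mul_one]
  rw [← h4, h2, hcard, pow_mul]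
end

section
/- Let k be a field of characteristic zero, G a finite group, ρ a finite-dimensional k-linear representation of G on a vector space V, and B : V → V → k a bilinear form that is nondegenerate and G-invariant, i.e., B(ρ(g)x, ρ(g)y) = B(x, y) for all g ∈ G and x, y ∈ V. Then the restriction of B to the subspace V^G of G-invariant vectors is nondegenerate. -/
/-- Let `k` be a field of characteristic zero, `G` a finite group,
`ρ` a finite-dimensional `k`-linear representation of `G` on `V`, and `B` a nondegenerate
`G`-invariant bilinear form on `V`. Then the restriction of `B` to the subspace `V^G` of
`G`-invariant vectors is nondegenerate. -/
theorem stmt_10 (k : Type*) [Field k] [CharZero k]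
    (G : Type*) [Group G] [Finite G]
    (V : Type*) [AddCommGroup V] [Module k V] [FiniteDimensional k V]
    (ρ : Representation k G V)
    (B : V →ₗ[k] V →ₗ[k] k)
    (hB1 : ∀ x : V, (∀ y : V, B x y = 0) → x = 0)
    (hB2 : ∀ y : V, (∀ x : V, B x y = 0) → y = 0)
    (hGinv : ∀ (g : G) (x y : V), B (ρ g x) (ρ g y) = B x y) :
    (∀ x : V, (∀ g : G, ρ g x = x) →
      (∀ y : V, (∀ g : G, ρ g y = y) → B x y = 0) → x = 0) ∧
    (∀ y : V, (∀ g : G, ρ g y = y) →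
      (∀ x : V, (∀ g : G, ρ g x = x) → B x y = 0) → y = 0) := by
  have := Fintype.ofFinite G
  set c : k := (Fintype.card G : k) with hc
  have hcne : c ≠ 0 := by
    simp [hc, Fintype.card_ne_zero]
  -- the averaging operator
  set avg : V → V := fun y => c⁻¹ • ∑ g : G, ρ g y with havg
  have avg_inv : ∀ (h : G) (y : V), ρ h (avg y) = avg y := by
    intro h y
    simp only [havg, map_smul, map_sum]
    congr 1
    exact Fintype.sum_equiv (Equiv.mulLeft h) _ _
      (fun g => by simp [← Module.End.mul_apply, ← map_mul])
  refine ⟨?_, ?_⟩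
  · intro x hx hx0
    apply hB1
    intro y
    have h1 : ∀ g : G, B x (ρ g y) = B x y := by
      intro g
      have := hGinv g⁻¹ x (ρ g y)
      rw [hx g⁻¹, ← Module.End.mul_apply, ← map_mul, inv_mul_cancel, map_one,
        Module.End.one_apply] at this
      exact this.symm
    have h2 : B x (avg y) = B x y := by
      simp only [havg, map_smul, map_sum, smul_eq_mul]
      simp only [h1, Finset.sum_const, Finset.card_univ, nsmul_eq_mul]
      field_simp
      rw [hc]
    rw [← h2]
    exact hx0 _ (fun g => avg_inv g y)
  · intro y hy hy0
    apply hB2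
    intro x
    have h1 : ∀ g : G, B (ρ g x) y = B x y := by
      intro g
      have := hGinv g⁻¹ (ρ g x) y
      rw [hy g⁻¹, ← Module.End.mul_apply, ← map_mul, inv_mul_cancel, map_one,
        Module.End.one_apply] at this
      exact this.symm
    have h2 : B (avg x) y = B x y := by
      simp only [havg, map_smul, map_sum, LinearMap.smul_apply, LinearMap.sum_apply,
        smul_eq_mul]
      simp only [h1, Finset.sum_const, Finset.card_univ, nsmul_eq_mul]
      field_simp
      rw [hc]
    rw [← h2]
    exact hy0 _ (fun g => avg_inv g x)
end

section
/- Let k be a field, V a finite-dimensional k-vector space, B : V → V → k a nondegenerate bilinear form, F : V → V a linear endomorphism, and λ ∈ k nonzero, such that B(Fx, Fy) = λ·B(x, y) for all x, y ∈ V. Let β, γ ∈ k with β·γ ≠ λ. Then the generalized eigenspace of F for β is B-orthogonal to the generalized eigenspace of F for γ: B(x, y) = 0 whenever (F − β)^N x = 0 and (F − γ)^N y = 0 for some N ≥ 0. -/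
/-- Let `k` be a field, `V` a finite-dimensional `k`-vector space, `B` a
nondegenerate bilinear form, `F` an endomorphism of `V`, and `l ≠ 0` in `k` with
`B (F x) (F y) = l * B x y`. If `β γ : k` satisfy `β * γ ≠ l`, then the generalized
eigenspace of `F` for `β` is `B`-orthogonal to the generalized eigenspace of `F` for `γ`. -/
theorem stmt_11 (k : Type*) [Field k]
    (V : Type*) [AddCommGroup V] [Module k V] [FiniteDimensional k V]
    (B : V →ₗ[k] V →ₗ[k] k)
    (hB1 : ∀ x : V, (∀ y : V, B x y = 0) → x = 0)
    (hB2 : ∀ y : V, (∀ x : V, B x y = 0) → y = 0)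
    (F : Module.End k V) (l : k) (hl : l ≠ 0)
    (hF : ∀ x y : V, B (F x) (F y) = l * B x y)
    (β γ : k) (hβγ : β * γ ≠ l) :
    ∀ x y : V, (∃ N : ℕ, ((F - β • (1 : Module.End k V)) ^ N) x = 0) →
      (∃ N : ℕ, ((F - γ • (1 : Module.End k V)) ^ N) y = 0) → B x y = 0 := by
  suffices key : ∀ n N M : ℕ, N + M ≤ n → ∀ x y : V,
      ((F - β • (1 : Module.End k V)) ^ N) x = 0 →
      ((F - γ • (1 : Module.End k V)) ^ M) y = 0 → B x y = 0 by
    rintro x y ⟨N, hx⟩ ⟨M, hy⟩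
    exact key (N + M) N M le_rfl x y hx hy
  intro n
  induction n with
  | zero =>
    intro N M h x y hx hy
    obtain ⟨hN, hM⟩ : N = 0 ∧ M = 0 := by omega
    subst hN
    simp only [pow_zero, Module.End.one_apply] at hx
    subst hx; simp
  | succ n ih =>
    intro N M h x y hx hy
    match N, M with
    | 0, M =>
      simp only [pow_zero, Module.End.one_apply] at hx
      subst hx; simp
    | N + 1, 0 =>
      simp only [pow_zero, Module.End.one_apply] at hy
      subst hy; simp
    | N + 1, M + 1 =>
      set u := (F - β • (1 : Module.End k V)) x with hu'
      set v := (F - γ • (1 : Module.End k V)) y with hv'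
      rw [pow_succ, Module.End.mul_apply] at hx hy
      have h1 : B x v = 0 := ih (N + 1) M (by omega) x v
        (by rw [pow_succ, Module.End.mul_apply]; exact hx) hy
      have h2 : B u y = 0 := ih N (M + 1) (by omega) u y hx
        (by rw [pow_succ, Module.End.mul_apply]; exact hy)
      have h3 : B u v = 0 := ih N M (by omega) u v hx hy
      have hFx : F x = β • x + u := by
        simp [hu', LinearMap.sub_apply, LinearMap.smul_apply]
      have hFy : F y = γ • y + v := by
        simp [hv', LinearMap.sub_apply, LinearMap.smul_apply]
      have hkey := hF x y
      rw [hFx, hFy] at hkey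
      simp only [map_add, map_smul, LinearMap.add_apply, LinearMap.smul_apply,
        smul_eq_mul, h1, h2, h3, mul_zero, add_zero, zero_add] at hkey
      have : (l - β * γ) * B x y = 0 := by linear_combination -hkey
      rcases mul_eq_zero.mp this with h | h
      · exact absurd ((sub_eq_zero.mp h).symm) hβγ
      · exact h
end

section
/- Let q = p^e be a prime power, r ≥ 0 an integer, and α ∈ ℂ an algebraic integer (integral over ℤ) such that every complex root of the minimal polynomial of α over ℚ is a q^r-Weil number. Then q^r/α is also an algebraic integer. -/
/-- Let `q = p^e` be a prime power, `r ≥ 0`, and `α ∈ ℂ` an algebraic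
integer such that every complex root of the minimal polynomial of `α` over `ℚ` is a
`q^r`-Weil number. Then `q^r / α` is also an algebraic integer. -/
theorem stmt_12 (p e : ℕ) (hp : p.Prime) (he : 1 ≤ e) (q : ℕ) (hq : q = p ^ e)
    (r : ℕ) (α : ℂ) (hα : IsIntegral ℤ α)
    (hWeil : ∀ β : ℂ, (Polynomial.aeval β) (minpoly ℚ α) = 0 →
      β ≠ 0 ∧ β * (starRingEnd ℂ) β = (q : ℂ) ^ r) :
    IsIntegral ℤ ((q : ℂ) ^ r / α) := by
  obtain ⟨hne, hmul⟩ := hWeil α (minpoly.aeval ℚ α)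
  have : (q : ℂ) ^ r / α = (starRingEnd ℂ) α := by
    field_simp [hmul.symm]
    exact hmul.symm
  rw [this]
  exact hα.map (starRingEnd ℂ).toIntAlgHom
end

section
/- Let q = p^e be a prime power, r ≥ 0 an integer, and α ∈ ℂ algebraic over ℚ such that for every field embedding σ : ℚ(α) → ℂ one has σ(α)·(σ(α))̄ = q^r, where ̄ denotes complex conjugation. Then either the number field K = ℚ(α) is totally real, or K is totally complex (has no real embeddings), the subfield ℚ(α + q^r/α) of K is totally real, and [K : ℚ(α + q^r/α)] = 2 (so K is a CM field). -/
open IntermediateField Polynomial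

lemma aux_real_on_gen {γ : ℂ} (σ : ℚ⟮γ⟯ →+* ℂ)
    (h : (starRingEnd ℂ) (σ (AdjoinSimple.gen ℚ γ)) = σ (AdjoinSimple.gen ℚ γ)) :
    ∀ x : ℚ⟮γ⟯, (starRingEnd ℂ) (σ x) = σ x := by
  have key : ((starRingEnd ℂ).comp σ).toRatAlgHom = σ.toRatAlgHom := by
    apply IntermediateField.adjoin_algHom_ext
    intro x hx
    rcases Set.mem_singleton_iff.mp hx with rfl
    exact h
  intro x
  exact DFunLike.congr_fun key x

lemma aux_extend {E K : Type*} [Field E] [Field K] [Algebra E K]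
    [Algebra.IsAlgebraic E K] (τ : E →+* ℂ) :
    ∃ σ : K →+* ℂ, ∀ x, σ (algebraMap E K x) = τ x := by
  letI : Algebra E ℂ := τ.toAlgebra
  haveI : NoZeroSMulDivisors E ℂ :=
    inferInstance
  haveI : NoZeroSMulDivisors E K :=
    inferInstance
  exact ⟨(IsAlgClosed.lift (R := E) (S := K) (M := ℂ)).toRingHom,
    fun x => AlgHom.commutes _ x⟩

set_option synthInstance.maxHeartbeats 1000000 in
set_option maxHeartbeats 1000000 in
/-- Let `q = p^e` be a prime power, `r ≥ 0`, and `α ∈ ℂ` algebraic over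
`ℚ` such that for every field embedding `σ : ℚ(α) → ℂ` one has `σ(α) * conj (σ(α)) = q^r`.
Then either `K = ℚ(α)` is totally real, or `K` is totally complex, the subfield
`ℚ(α + q^r/α)` is totally real, and `[K : ℚ(α + q^r/α)] = 2` (so `K` is a CM field);
the degree condition is expressed as `[K : ℚ] = 2 * [ℚ(α + q^r/α) : ℚ]` together with
the inclusion `ℚ(α + q^r/α) ⊆ ℚ(α)`. -/
theorem stmt_13 (p e : ℕ) (hp : p.Prime) (he : 1 ≤ e) (q : ℕ) (hq : q = p ^ e)
    (r : ℕ) (α : ℂ) (hα : IsAlgebraic ℚ α)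
    (hWeil : ∀ σ : ℚ⟮α⟯ →+* ℂ,
      σ (AdjoinSimple.gen ℚ α) * (starRingEnd ℂ) (σ (AdjoinSimple.gen ℚ α)) = (q : ℂ) ^ r) :
    (∀ (σ : ℚ⟮α⟯ →+* ℂ) (x : ℚ⟮α⟯), (starRingEnd ℂ) (σ x) = σ x) ∨
    ((∀ σ : ℚ⟮α⟯ →+* ℂ, ∃ x : ℚ⟮α⟯, (starRingEnd ℂ) (σ x) ≠ σ x) ∧
     (∀ (σ : ℚ⟮α + (q : ℂ) ^ r / α⟯ →+* ℂ) (x : ℚ⟮α + (q : ℂ) ^ r / α⟯),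
        (starRingEnd ℂ) (σ x) = σ x) ∧
     ℚ⟮α + (q : ℂ) ^ r / α⟯ ≤ ℚ⟮α⟯ ∧
     Module.finrank ℚ ℚ⟮α⟯ = 2 * Module.finrank ℚ ℚ⟮α + (q : ℂ) ^ r / α⟯) := by
  have hq0 : (q : ℂ) ≠ 0 := by
    have : q ≠ 0 := by rw [hq]; exact pow_ne_zero _ hp.pos.ne'
    exact_mod_cast this
  have hqr : ((q : ℂ)) ^ r ≠ 0 := pow_ne_zero _ hq0
  have hσne : ∀ σ : ℚ⟮α⟯ →+* ℂ, σ (AdjoinSimple.gen ℚ α) ≠ 0 := by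
    intro σ h
    apply hqr
    rw [← hWeil σ, h, zero_mul]
  have hconj : ∀ σ : ℚ⟮α⟯ →+* ℂ,
      (starRingEnd ℂ) (σ (AdjoinSimple.gen ℚ α)) = (q : ℂ) ^ r / σ (AdjoinSimple.gen ℚ α) := by
    intro σ
    rw [eq_div_iff (hσne σ)]
    linear_combination hWeil σ
  -- the identity embedding
  have hid : (algebraMap ℚ⟮α⟯ ℂ) (AdjoinSimple.gen ℚ α) = α := rfl
  have hα0 : α ≠ 0 := by
    have := hσne (algebraMap ℚ⟮α⟯ ℂ); rwa [hid] at this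
  by_cases hsq : α ^ 2 = (q : ℂ) ^ r
  · -- totally real case
    left
    intro σ x
    apply aux_real_on_gen
    have hgen : (AdjoinSimple.gen ℚ α) ^ 2 = ((q : ℚ⟮α⟯)) ^ r := by
      apply Subtype.ext
      push_cast
      exact hsq
    have hz2 : (σ (AdjoinSimple.gen ℚ α)) ^ 2 = (q : ℂ) ^ r := by
      rw [← map_pow, hgen]; push_cast; simp
    set z := σ (AdjoinSimple.gen ℚ α) with hz
    have hqreal : (starRingEnd ℂ) ((q:ℂ) ^ r) = (q:ℂ) ^ r := by
      rw [map_pow, map_natCast]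
    have hcz : (starRingEnd ℂ) z ^ 2 = z ^ 2 := by
      rw [← map_pow, hz2, hqreal, ← hz2]
    have : ((starRingEnd ℂ) z - z) * ((starRingEnd ℂ) z + z) = 0 := by ring_nf; linear_combination hcz
    rcases mul_eq_zero.mp this with h | h
    · exact sub_eq_zero.mp h
    · -- conj z = -z
      exfalso
      have hcz2 : (starRingEnd ℂ) z = -z := add_eq_zero_iff_eq_neg.mp h
      have := hWeil σ
      rw [← hz, hcz2] at this
      have hz0 : z ^ 2 = -((q:ℂ))^r := by linear_combination -this
      rw [hz2] at hz0
      exact hqr (by linear_combination hz0 / 2)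
  · right
    have hβmem : α + (q : ℂ) ^ r / α ∈ ℚ⟮α⟯ :=
      add_mem (mem_adjoin_simple_self ℚ α)
        (div_mem (pow_mem (IntermediateField.natCast_mem _ q) r) (mem_adjoin_simple_self ℚ α))
    have hle : ℚ⟮α + (q : ℂ) ^ r / α⟯ ≤ ℚ⟮α⟯ := by
      rw [adjoin_le_iff]; simpa using hβmem
    haveI : FiniteDimensional ℚ ℚ⟮α⟯ := adjoin.finiteDimensional hα.isIntegral
    -- no embedding of K is real
    have hnotreal : ∀ σ : ℚ⟮α⟯ →+* ℂ,
        (starRingEnd ℂ) (σ (AdjoinSimple.gen ℚ α)) ≠ σ (AdjoinSimple.gen ℚ α) := by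
      intro σ hc
      apply hsq
      have key := hWeil σ
      rw [hc] at key
      have hg2 : AdjoinSimple.gen ℚ α ^ 2 = ((q : ℚ⟮α⟯)) ^ r := by
        apply σ.injective
        rw [map_pow, map_pow, map_natCast, sq]
        exact key
      have := congrArg (Subtype.val) hg2
      push_cast at this
      simpa using this
    -- totally real of the trace field
    have hTR : ∀ (τ : ℚ⟮α + (q : ℂ) ^ r / α⟯ →+* ℂ) (x : ℚ⟮α + (q : ℂ) ^ r / α⟯),
        (starRingEnd ℂ) (τ x) = τ x := by
      intro τ
      apply aux_real_on_gen
      letI : Algebra ℚ⟮α + (q : ℂ) ^ r / α⟯ ℚ⟮α⟯ := (inclusion hle).toRingHom.toAlgebra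
      haveI : IsScalarTower ℚ ℚ⟮α + (q : ℂ) ^ r / α⟯ ℚ⟮α⟯ :=
        IsScalarTower.of_algebraMap_eq (fun x => Subtype.ext (by push_cast; rfl))
      haveI : Algebra.IsAlgebraic ℚ ℚ⟮α⟯ := Algebra.IsAlgebraic.of_finite ℚ _
      haveI : Algebra.IsAlgebraic ℚ⟮α + (q : ℂ) ^ r / α⟯ ℚ⟮α⟯ :=
        Algebra.IsAlgebraic.tower_top (K := ℚ) ℚ⟮α + (q : ℂ) ^ r / α⟯
      obtain ⟨σ', hσ'⟩ := aux_extend (K := ℚ⟮α⟯) τ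
      set w := σ' (AdjoinSimple.gen ℚ α) with hw
      have hwne : w ≠ 0 := hσne σ'
      have hwc : (starRingEnd ℂ) w = (q : ℂ) ^ r / w := hconj σ'
      have helem : (inclusion hle) (AdjoinSimple.gen ℚ (α + (q : ℂ) ^ r / α)) =
          AdjoinSimple.gen ℚ α + ((q : ℚ⟮α⟯)) ^ r / AdjoinSimple.gen ℚ α := by
        apply Subtype.ext
        push_cast
        rfl
      have hτgen : τ (AdjoinSimple.gen ℚ (α + (q : ℂ) ^ r / α)) = w + (q : ℂ) ^ r / w := by
        have h1 := hσ' (AdjoinSimple.gen ℚ (α + (q : ℂ) ^ r / α))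
        rw [show (algebraMap ℚ⟮α + (q : ℂ) ^ r / α⟯ ℚ⟮α⟯)
              (AdjoinSimple.gen ℚ (α + (q : ℂ) ^ r / α)) =
            AdjoinSimple.gen ℚ α + ((q : ℚ⟮α⟯)) ^ r / AdjoinSimple.gen ℚ α from helem] at h1
        rw [map_add, map_div₀, map_pow, map_natCast] at h1
        exact h1.symm
      rw [hτgen, map_add, map_div₀, map_pow, map_natCast, hwc]
      field_simp
      ring
    refine ⟨fun σ => ⟨AdjoinSimple.gen ℚ α, hnotreal σ⟩, hTR, hle, ?_⟩
    -- α is not in the trace field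
    have hαE : α ∉ ℚ⟮α + (q : ℂ) ^ r / α⟯ := by
      intro hmem
      have hcα : (starRingEnd ℂ) α = α :=
        hTR (algebraMap ℚ⟮α + (q : ℂ) ^ r / α⟯ ℂ) ⟨α, hmem⟩
      apply hsq
      have hW := hWeil (algebraMap ℚ⟮α⟯ ℂ)
      rw [hid, hcα] at hW
      linear_combination hW
    -- the minimal polynomial of α over the trace field has degree 2
    classical
    let b : ↥ℚ⟮α + (q : ℂ) ^ r / α⟯ := AdjoinSimple.gen ℚ (α + (q : ℂ) ^ r / α)
    let P : Polynomial ↥ℚ⟮α + (q : ℂ) ^ r / α⟯ :=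
      X ^ 2 - C b * X + C ((q : ↥ℚ⟮α + (q : ℂ) ^ r / α⟯) ^ r)
    have hPmonic : P.Monic := by unfold P; monicity!
    have hPdeg : P.natDegree = 2 := by unfold P; compute_degree!
    have hPeval : (Polynomial.aeval α) P = 0 := by
      have hb : (algebraMap ↥ℚ⟮α + (q : ℂ) ^ r / α⟯ ℂ) b = α + (q : ℂ) ^ r / α := rfl
      simp only [P, map_add, map_sub, map_mul, map_pow, aeval_X, aeval_C, hb, map_natCast]
      field_simp
      ring
    have hint : IsIntegral ↥ℚ⟮α + (q : ℂ) ^ r / α⟯ α :=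
      ⟨P, hPmonic, by rwa [← aeval_def]⟩
    have hmind : (minpoly ↥ℚ⟮α + (q : ℂ) ^ r / α⟯ α).natDegree = 2 := by
      refine le_antisymm ?_ ?_
      · have h1 := Polynomial.natDegree_le_of_dvd (minpoly.dvd _ _ hPeval) hPmonic.ne_zero
        rwa [hPdeg] at h1
      · rw [minpoly.two_le_natDegree_iff hint]
        rintro ⟨y, hy⟩
        have hyy : (y : ℂ) = α := hy
        exact hαE (Eq.mp (by rw [hyy]) y.2)
    -- identify the extension with the simple adjoin
    have hEq : extendScalars hle = adjoin ↥ℚ⟮α + (q : ℂ) ^ r / α⟯ {α} :=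
      extendScalars_adjoin hle
    have hfin2 : Module.finrank ↥ℚ⟮α + (q : ℂ) ^ r / α⟯ ↥(extendScalars hle) = 2 := by
      rw [hEq, adjoin.finrank hint, hmind]
    have h3 : (extendScalars hle).restrictScalars ℚ = ℚ⟮α⟯ := extendScalars_restrictScalars hle
    have h4 : Module.finrank ℚ ↥(restrictScalars ℚ (extendScalars hle)) =
        Module.finrank ℚ ↥(extendScalars hle) := rfl
    have hKrank : Module.finrank ℚ ℚ⟮α⟯ = Module.finrank ℚ ↥(extendScalars hle) :=
      ((congrArg (fun S : IntermediateField ℚ ℂ => Module.finrank ℚ ↥S) h3).symm).trans h4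
    have tower := Module.finrank_mul_finrank ℚ ↥ℚ⟮α + (q : ℂ) ^ r / α⟯ ↥(extendScalars hle)
    rw [hKrank, ← tower, hfin2, mul_comm]
end
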